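/- arXiv:2502.09220 — 4 statements merged into one kernel-verified Lean document; each statement's English description precedes it below -/
import Mathlib

section
/- If the dependency graph of a finite ground normal logic program P has no negative cycle, then P has at least one stable model (a 2-valued stable partial model). -/
/-- Three truth values: false, unknown, true. -/
inductive TV3 | fls | unk | tru
  deriving DecidableEq

namespace TV3

def toFin : TV3 → Fin 3
  | fls => 0 | unk => 1 | tru => 2

/-- The truth order f < u < t. -/
instance : LinearOrder TV3 :=
  LinearOrder.lift' toFin (by intro a b h; cases a <;> cases b <;> simp_all [toFin])

instance : BoundedOrder TV3 where
  top := tru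
  bot := fls
  le_top x := by cases x <;> decide
  bot_le x := by cases x <;> decide

/-- Kleene negation. -/
def neg : TV3 → TV3 | fls => tru | unk => unk | tru => fls

end TV3

def ofBool : Bool → TV3 | true => .tru | false => .fls

/-- The subset order on truth values: f <ₛ u and t <ₛ u. -/
def leS (x y : TV3) : Prop := x = y ∨ y = TV3.unk

section LP

variable {A : Type*} [Fintype A] [DecidableEq A]

/-- Pointwise subset order on 3-valued interpretations. -/
def leSI (I₁ I₂ : A → TV3) : Prop := ∀ a, leS (I₁ a) (I₂ a)

/-- The set of 2-valued interpretations compatible with a 3-valued one. -/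
def gamma (I : A → TV3) : Set (A → Bool) :=
  {J | ∀ a, I a ≠ TV3.unk → ofBool (J a) = I a}

/-- A ground normal rule: head ← pos, ∼neg. -/
structure Rule (A : Type*) where
  head : A
  pos : Finset A
  neg : Finset A
  deriving DecidableEq

/-- A finite ground normal logic program. -/
abbrev Program (A : Type*) [DecidableEq A] := Finset (Rule A)

/-- Immediate consequence operator T_P. -/
def TP (P : Program A) (J : A → Bool) (a : A) : Bool :=
  decide (∃ r ∈ P, r.head = a ∧ (∀ p ∈ r.pos, J p = true) ∧ (∀ q ∈ r.neg, J q = false))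

/-- 2-valued value of the body formula of a rule. -/
noncomputable def bodyVal2 (r : Rule A) (s : A → Bool) : Bool :=
  (r.pos.inf s) && !(r.neg.sup s)

/-- The Boolean network encoding of a program: f_v = ⋁_{head r = v} body-formula(r). -/
noncomputable def encBN (P : Program A) : A → (A → Bool) → Bool :=
  fun v s => P.sup fun r => if r.head = v then bodyVal2 r s else false

/-- 3-valued (Kleene) value of the body formula of a rule. -/
def bodyVal3 (r : Rule A) (I : A → TV3) : TV3 :=
  (r.pos.inf I) ⊓ (r.neg.inf fun q => TV3.neg (I q))

/-- 3-valued evaluation of rhs(a), the disjunction of bodies of rules with head a. -/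
def rhs3 (P : Program A) (I : A → TV3) (a : A) : TV3 :=
  P.sup fun r => if r.head = a then bodyVal3 r I else TV3.fls

/-- Signs of arcs. -/
inductive Sign | pos | neg
  deriving DecidableEq

/-- A signed directed graph on A. -/
abbrev SGraph (A : Type*) := A → A → Sign → Prop

def posArc (P : Program A) (u v : A) : Prop := ∃ r ∈ P, r.head = v ∧ u ∈ r.pos
def negArc (P : Program A) (u v : A) : Prop := ∃ r ∈ P, r.head = v ∧ u ∈ r.neg

/-- Dependency graph of a program. -/
def dg (P : Program A) : SGraph A := fun u v s =>
  match s with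
  | Sign.pos => posArc P u v
  | Sign.neg => negArc P u v

/-- Influence graph of a Boolean network. -/
def ig (f : A → (A → Bool) → Bool) : SGraph A := fun u v s =>
  match s with
  | Sign.pos => ∃ x : A → Bool, f v (Function.update x u false) < f v (Function.update x u true)
  | Sign.neg => ∃ x : A → Bool, f v (Function.update x u true) < f v (Function.update x u false)

/-- A (closed signed) cycle in a signed graph: vertices v₀,…,vₙ with arcs
vᵢ → vᵢ₊₁ (indices mod n+1) carrying the given signs. -/
structure SCycle (G : SGraph A) where
  n : ℕ
  vtx : Fin (n + 1) → A
  sgn : Fin (n + 1) → Sign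
  arc : ∀ i, G (vtx i) (vtx (i + 1)) (sgn i)

/-- A cycle is negative if it has an odd number of negative arcs. -/
def SCycle.IsNeg {G : SGraph A} (c : SCycle G) : Prop :=
  (Finset.univ.filter fun i => c.sgn i = Sign.neg).card % 2 = 1

/-- A cycle is positive if it has an even number of negative arcs. -/
def SCycle.IsPos {G : SGraph A} (c : SCycle G) : Prop :=
  (Finset.univ.filter fun i => c.sgn i = Sign.neg).card % 2 = 0

/-- U is a positive feedback vertex set: it meets every positive cycle. -/
def IsPFVS (G : SGraph A) (U : Finset A) : Prop :=
  ∀ c : SCycle G, c.IsPos → ∃ i, c.vtx i ∈ U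

/-- P is tight: its positive dependency graph is acyclic. -/
def Tight (P : Program A) : Prop :=
  IsEmpty (SCycle (fun u v s => s = Sign.pos ∧ posArc P u v))

/-- Synchronous update of a Boolean network. -/
def syncNext (f : A → (A → Bool) → Bool) (x : A → Bool) : A → Bool := fun v => f v x

/-- Fully asynchronous transition. -/
def asyncStep (f : A → (A → Bool) → Bool) (x y : A → Bool) : Prop :=
  ∃ v, f v x ≠ x v ∧ y = Function.update x v (f v x)

/-- Nonempty trap set of the asynchronous state transition graph. -/
def IsTrapSet (f : A → (A → Bool) → Bool) (S : Set (A → Bool)) : Prop :=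
  S.Nonempty ∧ ∀ x ∈ S, ∀ y, asyncStep f x y → y ∈ S

/-- Attractor: subset-minimal nonempty trap set. -/
def IsAttractor (f : A → (A → Bool) → Bool) (S : Set (A → Bool)) : Prop :=
  IsTrapSet f S ∧ ∀ T, IsTrapSet f T → T ⊆ S → T = S

def IsFixedPoint (f : A → (A → Bool) → Bool) (x : A → Bool) : Prop :=
  syncNext f x = x

/-- Trap space of a BN under synchronous update. -/
def IsSyncTrapSpace (f : A → (A → Bool) → Bool) (m : A → TV3) : Prop :=
  ∀ s ∈ gamma m, syncNext f s ∈ gamma m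

/-- Trap space of a BN under asynchronous update. -/
def IsAsyncTrapSpace (f : A → (A → Bool) → Bool) (m : A → TV3) : Prop :=
  ∀ s ∈ gamma m, ∀ y, asyncStep f s y → y ∈ gamma m

/-- Supported trap space: γ(I) is closed under T_P. -/
def IsSuppTrapSpace (P : Program A) (I : A → TV3) : Prop :=
  ∀ J ∈ gamma I, TP P J ∈ gamma I

/-- Supported partial model: 3-valued model of Clark's completion. -/
def IsSuppPartialModel (P : Program A) (I : A → TV3) : Prop :=
  ∀ a, I a = rhs3 P I a

/-- The 3-valued one-step operator of the Przymusinski reduct P^I applied to K: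
negative literals are evaluated under I (Kleene negation), positive ones under K. -/
def Phi (P : Program A) (I K : A → TV3) (a : A) : TV3 :=
  P.sup fun r =>
    if r.head = a then (r.pos.inf K) ⊓ (r.neg.inf fun q => TV3.neg (I q)) else TV3.fls

/-- Stable partial model: I is the ≤ₜ-least 3-valued model of the reduct P^I. -/
def IsStablePartial (P : Program A) (I : A → TV3) : Prop :=
  (∀ a, Phi P I I a ≤ I a) ∧
    ∀ K : A → TV3, (∀ a, Phi P I K a ≤ K a) → ∀ a, I a ≤ K a

/-- Regular model: ≤ₛ-minimal stable partial model. -/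
def IsRegularModel (P : Program A) (I : A → TV3) : Prop :=
  IsStablePartial P I ∧ ∀ I', IsStablePartial P I' → leSI I' I → I' = I

def Is2Valued (I : A → TV3) : Prop := ∀ a, I a ≠ TV3.unk

/-- The one-step operator of the Gelfond–Lifschitz reduct P^J applied to K. -/
noncomputable def PhiB (P : Program A) (J K : A → Bool) (a : A) : Bool :=
  P.sup fun r =>
    if r.head = a then ((r.pos.inf K) && !(r.neg.sup J)) else false

/-- Stable model: J is the least model of the Gelfond–Lifschitz reduct P^J. -/
def IsStableModel (P : Program A) (J : A → Bool) : Prop :=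
  (∀ a, PhiB P J J a ≤ J a) ∧
    ∀ K : A → Bool, (∀ a, PhiB P J K a ≤ K a) → ∀ a, J a ≤ K a

/-- Every cycle of dg(P) contains no negative arc. -/
def LocallyStratified (P : Program A) : Prop :=
  ∀ c : SCycle (dg P), ∀ i, c.sgn i ≠ Sign.neg

def NoNegCycle (G : SGraph A) : Prop := ∀ c : SCycle G, ¬ c.IsNeg
def NoPosCycle (G : SGraph A) : Prop := ∀ c : SCycle G, ¬ c.IsPos

end LP

/-! Stratify the atoms by their rank, the number of atoms they depend on: arcs of `dg P` never
decrease it, and an arc between atoms of equal rank lies inside a strongly connected component.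
Without negative cycles, all walks between two atoms of one component have the same parity of
negative arcs, so each layer is 2-coloured, positive arcs preserving and negative arcs flipping the
colour. Flipping the truth values of one colour class turns the antitone map
`J ↦ least model of P^J` into a monotone one on the layer; its least fixed point extends a stable
model of the lower layers to the current one. -/

section LeastModel

variable {A : Type*} [DecidableEq A]

theorem phiB_eq_true_iff {P : Program A} {J K : A → Bool} {a : A} :
    PhiB P J K a = true ↔
      ∃ r ∈ P, r.head = a ∧ (∀ p ∈ r.pos, K p = true) ∧ ∀ q ∈ r.neg, J q = false := by
  have sup_true {s : Finset (Rule A)} {f : Rule A → Bool} :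
      s.sup f = true ↔ ∃ i ∈ s, f i = true :=
    Finset.sup_eq_top_iff
  have inf_true {s : Finset A} {f : A → Bool} : s.inf f = true ↔ ∀ i ∈ s, f i = true :=
    Finset.inf_eq_top_iff _ _
  have sup_false {s : Finset A} {f : A → Bool} : s.sup f = false ↔ ∀ i ∈ s, f i = false :=
    Finset.sup_eq_bot_iff _ _
  simp [PhiB, sup_true, inf_true, sup_false]

theorem phiB_mono (P : Program A) (J : A → Bool) : Monotone (PhiB P J) := by
  intro K K' hK a
  rw [Bool.le_iff_imp, phiB_eq_true_iff, phiB_eq_true_iff]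
  rintro ⟨r, hr, rfl, hpos, hneg⟩
  exact ⟨r, hr, rfl, fun p hp => Bool.le_iff_imp.mp (hK p) (hpos p hp), hneg⟩

/-- The least model of the Gelfond–Lifschitz reduct `P^J`. -/
noncomputable def leastModel (P : Program A) (J : A → Bool) : A → Bool :=
  OrderHom.lfp ⟨PhiB P J, phiB_mono P J⟩

theorem phiB_leastModel (P : Program A) (J : A → Bool) :
    PhiB P J (leastModel P J) = leastModel P J :=
  OrderHom.map_lfp ⟨PhiB P J, phiB_mono P J⟩

theorem leastModel_le {P : Program A} {J K : A → Bool} (h : ∀ a, PhiB P J K a ≤ K a) :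
    leastModel P J ≤ K :=
  OrderHom.lfp_le _ h

theorem isStableModel_of_leastModel_eq {P : Program A} {J : A → Bool}
    (h : leastModel P J = J) : IsStableModel P J := by
  have hfix := phiB_leastModel P J
  rw [h] at hfix
  exact ⟨fun a => (congrFun hfix a).le, fun K hK => h ▸ leastModel_le hK⟩

/-- The reduct `P^J` is antitone in `J`; on a set `S` closed under positive dependencies only the
negative literals of the rules for `S` matter. -/
theorem leastModel_le_leastModel {P : Program A} {J J' : A → Bool} (S : Set A)
    (hS : ∀ r ∈ P, r.head ∈ S → (∀ p ∈ r.pos, p ∈ S) ∧ ∀ q ∈ r.neg, J' q ≤ J q) :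
    ∀ a ∈ S, leastModel P J a ≤ leastModel P J' a := by
  classical
  let K : A → Bool := fun a => decide (a ∈ S → leastModel P J' a = true)
  have hK : leastModel P J ≤ K := leastModel_le fun a => by
    rw [Bool.le_iff_imp, phiB_eq_true_iff]
    rintro ⟨r, hr, rfl, hpos, hneg⟩
    simp only [K, decide_eq_true_eq] at hpos ⊢
    intro ha
    obtain ⟨hposS, hnegS⟩ := hS r hr ha
    rw [← phiB_leastModel, phiB_eq_true_iff]
    exact ⟨r, hr, rfl, fun p hp => hpos p hp (hposS p hp),
      fun q hq => le_bot_iff.mp ((hnegS q hq).trans (hneg q hq).le)⟩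
  intro a ha
  rw [Bool.le_iff_imp]
  intro h
  simpa [K, ha] using Bool.le_iff_imp.mp (hK a) h

theorem leastModel_eqOn {P : Program A} {J J' : A → Bool} (S : Set A)
    (hS : ∀ r ∈ P, r.head ∈ S → (∀ p ∈ r.pos, p ∈ S) ∧ ∀ q ∈ r.neg, q ∈ S)
    (hJ : Set.EqOn J J' S) : Set.EqOn (leastModel P J) (leastModel P J') S := by
  have hle {J J'} (hJ : Set.EqOn J J' S) : ∀ a ∈ S, leastModel P J a ≤ leastModel P J' a :=
    leastModel_le_leastModel S fun r hr ha =>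
      ⟨(hS r hr ha).1, fun q hq => (hJ ((hS r hr ha).2 q hq)).ge⟩
  exact fun a ha => le_antisymm (hle hJ a ha) (hle hJ.symm a ha)

/-- Twisting truth values by `σ` turns the antitone `J ↦ leastModel P J` into a monotone map on
`C`; its least fixed point is the extension. -/
theorem exists_leastModel_eqOn_union {P : Program A} {U C : Set A} {σ J₀ : A → Bool}
    (hU : ∀ r ∈ P, r.head ∈ U → (∀ p ∈ r.pos, p ∈ U) ∧ ∀ q ∈ r.neg, q ∈ U)
    (hC : ∀ r ∈ P, r.head ∈ C →
      (∀ p ∈ r.pos, p ∈ U ∨ p ∈ C ∧ σ p = σ r.head) ∧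
      ∀ q ∈ r.neg, q ∈ U ∨ q ∈ C ∧ σ q ≠ σ r.head)
    (hJ₀ : Set.EqOn (leastModel P J₀) J₀ U) :
    ∃ J, Set.EqOn (leastModel P J) J (U ∪ C) := by
  classical
  let extend (X : A → Bool) : A → Bool := fun a => if a ∈ U then J₀ a else xor (X a) (σ a)
  have extend_eqOn (X : A → Bool) : Set.EqOn (extend X) J₀ U := fun a ha => if_pos ha
  have extend_le {X X' : A → Bool} (hX : X ≤ X') (q : A) :
      (σ q = false → extend X q ≤ extend X' q) ∧ (σ q = true → extend X' q ≤ extend X q) := by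
    by_cases hq : q ∈ U
    · simp [extend, hq]
    · constructor <;> intro hσ
      · simpa [extend, hq, hσ] using hX q
      · simpa [extend, hq, hσ] using compl_le_compl (hX q)
  have compare (b : Bool) {J J' : A → Bool} (hJ : Set.EqOn J J' U)
      (hJC : ∀ q ∈ C, σ q ≠ b → J' q ≤ J q) (a : A) (ha : a ∈ C) (hσ : σ a = b) :
      leastModel P J a ≤ leastModel P J' a := by
    refine leastModel_le_leastModel (U ∪ {a | a ∈ C ∧ σ a = b}) (fun r hr hhead => ?_) a
      (Or.inr ⟨ha, hσ⟩)
    rcases hhead with hhead | ⟨hhead, rfl⟩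
    · exact ⟨fun p hp => Or.inl ((hU r hr hhead).1 p hp),
        fun q hq => (hJ ((hU r hr hhead).2 q hq)).ge⟩
    · refine ⟨fun p hp => ?_, fun q hq => ?_⟩
      · rcases (hC r hr hhead).1 p hp with hp | hp
        exacts [Or.inl hp, Or.inr hp]
      · rcases (hC r hr hhead).2 q hq with hq | ⟨hqC, hσq⟩
        exacts [(hJ hq).ge, hJC q hqC hσq]
  let F : (A → Bool) →o (A → Bool) :=
    ⟨fun X a => if a ∈ C then xor (leastModel P (extend X) a) (σ a) else false, by
      intro X X' hX a
      by_cases ha : a ∈ C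
      · simp only [ha, if_true]
        cases hσ : σ a
        · simpa using compare false (extend_eqOn X |>.trans (extend_eqOn X').symm)
            (fun q _ hq => (extend_le hX q).2 (by simpa using hq)) a ha hσ
        · simpa using compl_le_compl (compare true (extend_eqOn X' |>.trans (extend_eqOn X).symm)
            (fun q _ hq => (extend_le hX q).1 (by simpa using hq)) a ha hσ)
      · simp [ha]⟩
  refine ⟨extend (OrderHom.lfp F), fun a ha => ?_⟩
  by_cases haU : a ∈ U
  · rw [leastModel_eqOn U hU (extend_eqOn _) haU, hJ₀ haU, extend_eqOn _ haU]
  · have hfix : (if a ∈ C then xor (leastModel P (extend (OrderHom.lfp F)) a) (σ a) else false) =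
        OrderHom.lfp F a := congrFun (OrderHom.map_lfp F) a
    rw [if_pos (ha.resolve_left haU)] at hfix
    rw [show extend (OrderHom.lfp F) a = xor (OrderHom.lfp F a) (σ a) from if_neg haU, ← hfix,
      Bool.xor_assoc, Bool.xor_self, Bool.xor_false]

end LeastModel

section Walks

variable {A : Type*} [DecidableEq A]

inductive DgWalk (P : Program A) : A → A → ℕ → Prop
  | refl (a : A) : DgWalk P a a 0
  | tail_pos {a b c : A} {k : ℕ} : DgWalk P a b k → posArc P b c → DgWalk P a c k
  | tail_neg {a b c : A} {k : ℕ} : DgWalk P a b k → negArc P b c → DgWalk P a c (k + 1)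

namespace DgWalk

variable {P : Program A} {a b c : A} {k l : ℕ}

theorem trans (h : DgWalk P a b k) (h' : DgWalk P b c l) : DgWalk P a c (k + l) := by
  induction h' with
  | refl => exact h
  | tail_pos _ hbc ih => exact ih.tail_pos hbc
  | tail_neg _ hbc ih => exact ih.tail_neg hbc

theorem exists_arc_seq (h : DgWalk P a b k) :
    ∃ (n : ℕ) (v : ℕ → A) (s : ℕ → Sign), v 0 = a ∧ v n = b ∧
      (∀ i < n, dg P (v i) (v (i + 1)) (s i)) ∧
      ∑ i ∈ Finset.range n, (if s i = Sign.neg then 1 else 0) = k := by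
  have snoc {b c : A} {k : ℕ} (t : Sign) (hbc : dg P b c t)
      (h : ∃ (n : ℕ) (v : ℕ → A) (s : ℕ → Sign), v 0 = a ∧ v n = b ∧
        (∀ i < n, dg P (v i) (v (i + 1)) (s i)) ∧
        ∑ i ∈ Finset.range n, (if s i = Sign.neg then 1 else 0) = k) :
      ∃ (n : ℕ) (v : ℕ → A) (s : ℕ → Sign), v 0 = a ∧ v n = c ∧
        (∀ i < n, dg P (v i) (v (i + 1)) (s i)) ∧
        ∑ i ∈ Finset.range n, (if s i = Sign.neg then 1 else 0) =
          k + if t = Sign.neg then 1 else 0 := by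
    obtain ⟨n, v, s, h0, hn, harc, hk⟩ := h
    refine ⟨n + 1, Function.update v (n + 1) c, Function.update s n t, by simpa using h0,
      by simp, fun i hi => ?_, ?_⟩
    · rcases Nat.lt_succ_iff_lt_or_eq.mp hi with hi | rfl
      · simpa [hi.ne, (Nat.succ_lt_succ hi).ne, (hi.trans n.lt_succ_self).ne] using harc i hi
      · simpa [hn] using hbc
    · rw [Finset.sum_range_succ, ← hk]
      congr 1
      · exact Finset.sum_congr rfl fun i hi => by simp [(Finset.mem_range.mp hi).ne]
      · simp
  induction h with
  | refl => exact ⟨0, fun _ => a, fun _ => Sign.pos, rfl, rfl, by simp, by simp⟩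
  | tail_pos _ hbc ih => simpa using snoc Sign.pos hbc ih
  | tail_neg _ hbc ih => simpa using snoc Sign.neg hbc ih

theorem loop_mod_two_eq_zero (hP : NoNegCycle (dg P)) (h : DgWalk P a a k) : k % 2 = 0 := by
  obtain ⟨n, v, s, h0, hn, harc, rfl⟩ := h.exists_arc_seq
  cases n with
  | zero => simp
  | succ m =>
    have hodd := hP ⟨m, fun i => v i, fun i => s i, fun i => by
      rw [Fin.val_add_one]
      split_ifs with hi
      · simpa [hi, h0, hn] using harc m m.lt_succ_self
      · exact harc i i.is_lt⟩
    simp only [SCycle.IsNeg, Finset.card_filter] at hodd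
    rw [Fin.sum_univ_eq_sum_range (fun i => if s i = Sign.neg then 1 else 0)] at hodd
    omega

end DgWalk

end Walks

section Layers

variable {A : Type*} [DecidableEq A] {P : Program A} {a b c : A}

def DgReach (P : Program A) (a b : A) : Prop := ∃ k, DgWalk P a b k

namespace DgReach

theorem refl (P : Program A) (a : A) : DgReach P a a := ⟨0, .refl a⟩

theorem trans (h : DgReach P a b) (h' : DgReach P b c) : DgReach P a c :=
  let ⟨_, hk⟩ := h; let ⟨_, hl⟩ := h'; ⟨_, hk.trans hl⟩

theorem of_posArc (h : posArc P a b) : DgReach P a b := ⟨0, (DgWalk.refl a).tail_pos h⟩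

theorem of_negArc (h : negArc P a b) : DgReach P a b := ⟨1, (DgWalk.refl a).tail_neg h⟩

end DgReach

noncomputable def sccBase (P : Program A) (a : A) : A :=
  haveI : Nonempty A := ⟨a⟩
  Classical.epsilon fun b => DgReach P a b ∧ DgReach P b a

theorem sccBase_spec (P : Program A) (a : A) :
    DgReach P a (sccBase P a) ∧ DgReach P (sccBase P a) a :=
  haveI : Nonempty A := ⟨a⟩
  Classical.epsilon_spec (p := fun b => DgReach P a b ∧ DgReach P b a) ⟨a, .refl P a, .refl P a⟩

theorem sccBase_eq (hab : DgReach P a b) (hba : DgReach P b a) : sccBase P a = sccBase P b := by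
  unfold sccBase
  congr 1
  ext c
  exact ⟨fun h => ⟨hba.trans h.1, h.2.trans hab⟩, fun h => ⟨hab.trans h.1, h.2.trans hba⟩⟩

open Classical in
/-- Without negative cycles all walks from `sccBase P a` to `a` have the same parity
(`parityLabel_eq`). -/
noncomputable def parityLabel (P : Program A) (a : A) : Bool :=
  decide (∃ k, DgWalk P (sccBase P a) a k ∧ k % 2 = 1)

theorem parityLabel_eq (hP : NoNegCycle (dg P)) {k : ℕ} (h : DgWalk P (sccBase P a) a k) :
    parityLabel P a = decide (k % 2 = 1) := by
  classical
  obtain ⟨l, hl⟩ := (sccBase_spec P a).1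
  have hpar {k' : ℕ} (h' : DgWalk P (sccBase P a) a k') : k' % 2 = k % 2 := by
    have := (h'.trans hl).loop_mod_two_eq_zero hP
    have := (h.trans hl).loop_mod_two_eq_zero hP
    omega
  unfold parityLabel
  exact decide_eq_decide.mpr ⟨fun ⟨k', hk', hodd⟩ => hpar hk' ▸ hodd, fun hodd => ⟨k, h, hodd⟩⟩

theorem parityLabel_of_posArc (hP : NoNegCycle (dg P)) (h : posArc P a b) (hba : DgReach P b a) :
    parityLabel P a = parityLabel P b := by
  obtain ⟨k, hk⟩ := (sccBase_spec P a).2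
  have hb : DgWalk P (sccBase P b) b k := sccBase_eq (.of_posArc h) hba ▸ hk.tail_pos h
  rw [parityLabel_eq hP hk, parityLabel_eq hP hb]

theorem parityLabel_of_negArc (hP : NoNegCycle (dg P)) (h : negArc P a b) (hba : DgReach P b a) :
    parityLabel P a ≠ parityLabel P b := by
  obtain ⟨k, hk⟩ := (sccBase_spec P a).2
  have hb : DgWalk P (sccBase P b) b (k + 1) := sccBase_eq (.of_negArc h) hba ▸ hk.tail_neg h
  rw [parityLabel_eq hP hk, parityLabel_eq hP hb]
  simp only [ne_eq, decide_eq_decide]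
  omega

variable [Fintype A]

open Classical in
/-- Constant on strongly connected components, strictly increasing along arcs between them. -/
noncomputable def depRank (P : Program A) (a : A) : ℕ :=
  (Finset.univ.filter (DgReach P · a)).card

theorem depRank_le_of_reach (h : DgReach P a b) : depRank P a ≤ depRank P b := by
  classical
  exact Finset.card_le_card fun c hc => by
    simp only [Finset.mem_filter, Finset.mem_univ, true_and] at hc ⊢
    exact hc.trans h

theorem reach_of_depRank_eq (h : DgReach P a b) (heq : depRank P a = depRank P b) :
    DgReach P b a := by
  classical
  have hsub : Finset.univ.filter (DgReach P · a) ⊆ Finset.univ.filter (DgReach P · b) :=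
    fun c hc => by
      simp only [Finset.mem_filter, Finset.mem_univ, true_and] at hc ⊢
      exact hc.trans h
  have := Finset.eq_of_subset_of_card_le hsub heq.ge
  have hb : b ∈ Finset.univ.filter (DgReach P · b) := by simpa using DgReach.refl P b
  simpa [← this] using hb

theorem depRank_le_card (P : Program A) (a : A) : depRank P a ≤ Fintype.card A :=
  Finset.card_le_univ _

theorem depRank_body_lt_of_head_lt (m : ℕ) :
    ∀ r ∈ P, depRank P r.head < m →
      (∀ p ∈ r.pos, depRank P p < m) ∧ ∀ q ∈ r.neg, depRank P q < m :=
  fun r hr hhead =>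
    ⟨fun _ hp => (depRank_le_of_reach (.of_posArc ⟨r, hr, rfl, hp⟩)).trans_lt hhead,
      fun _ hq => (depRank_le_of_reach (.of_negArc ⟨r, hr, rfl, hq⟩)).trans_lt hhead⟩

theorem body_parityLabel_of_depRank_head_eq (hP : NoNegCycle (dg P)) (m : ℕ) :
    ∀ r ∈ P, depRank P r.head = m →
      (∀ p ∈ r.pos, depRank P p < m ∨
        depRank P p = m ∧ parityLabel P p = parityLabel P r.head) ∧
      ∀ q ∈ r.neg, depRank P q < m ∨
        depRank P q = m ∧ parityLabel P q ≠ parityLabel P r.head := by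
  rintro r hr rfl
  refine ⟨fun p hp => ?_, fun q hq => ?_⟩
  · have harc : posArc P p r.head := ⟨r, hr, rfl, hp⟩
    rcases (depRank_le_of_reach (.of_posArc harc)).lt_or_eq with hlt | heq
    · exact .inl hlt
    · exact .inr ⟨heq, parityLabel_of_posArc hP harc (reach_of_depRank_eq (.of_posArc harc) heq)⟩
  · have harc : negArc P q r.head := ⟨r, hr, rfl, hq⟩
    rcases (depRank_le_of_reach (.of_negArc harc)).lt_or_eq with hlt | heq
    · exact .inl hlt
    · exact .inr ⟨heq, parityLabel_of_negArc hP harc (reach_of_depRank_eq (.of_negArc harc) heq)⟩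

end Layers

/-- if the dependency graph has no negative cycle, P has at least
one stable model. -/
theorem stmt14 {A : Type*} [Fintype A] [DecidableEq A] (P : Program A)
    (h : NoNegCycle (dg P)) :
    ∃ J : A → Bool, IsStableModel P J := by
  have layers (m : ℕ) : ∃ J, Set.EqOn (leastModel P J) J {a | depRank P a < m} := by
    induction m with
    | zero => exact ⟨fun _ => false, fun a ha => absurd ha (Nat.not_lt_zero _)⟩
    | succ m ih =>
      obtain ⟨J₀, hJ₀⟩ := ih
      obtain ⟨J, hJ⟩ := exists_leastModel_eqOn_union (C := {a | depRank P a = m})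
        (depRank_body_lt_of_head_lt m) (body_parityLabel_of_depRank_head_eq h m) hJ₀
      exact ⟨J, fun a ha => hJ (Nat.lt_succ_iff_lt_or_eq.mp ha)⟩
  obtain ⟨J, hJ⟩ := layers (Fintype.card A + 1)
  exact ⟨J, isStableModel_of_leastModel_eq
    (funext fun a => hJ (Nat.lt_succ_of_le (depRank_le_card P a)))⟩
end

section
/- If the dependency graph of a finite ground normal logic program P has no positive cycle, then P has exactly one regular model. -/
section AuxProof

open Classical in
noncomputable section

variable {A : Type*} [Fintype A] [DecidableEq A]

/-- Arc relation of the dependency graph, forgetting signs. -/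
private def arcRel (P : Program A) (u v : A) : Prop := ∃ s, dg P u v s

private lemma exists_chain' {α : Type*} {r : α → α → Prop} {a b : α}
    (h : Relation.TransGen r a b) :
    ∃ n : ℕ, ∃ g : ℕ → α, g 0 = a ∧ g (n + 1) = b ∧ ∀ i ≤ n, r (g i) (g (i + 1)) := by
  induction h with
  | @single b hab =>
      refine ⟨0, fun i => if i = 0 then a else b, by simp, by simp, ?_⟩
      intro i hi
      interval_cases i
      simpa using hab
  | @tail b c hab hbc ih =>
      obtain ⟨n, g, h0, hn, harc⟩ := ih
      refine ⟨n + 1, fun i => if i ≤ n + 1 then g i else c, by simp [h0], by simp, ?_⟩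
      intro i hi
      by_cases hle : i ≤ n
      · simp only [if_pos (by omega : i ≤ n + 1), if_pos (by omega : i + 1 ≤ n + 1)]
        exact harc i hle
      · have hieq : i = n + 1 := by omega
        subst hieq
        simp only [if_pos le_rfl, if_neg (by omega : ¬ n + 1 + 1 ≤ n + 1)]
        rw [hn]; exact hbc

/-- Doubling a cycle yields a positive cycle. -/
private lemma exists_pos_cycle {G : SGraph A} (c : SCycle G) :
    ∃ c' : SCycle G, c'.IsPos := by
  classical
  have hmpos : 0 < c.n + 1 := Nat.succ_pos _
  have hlt : ∀ k : ℕ, k % (c.n + 1) < c.n + 1 := fun k => Nat.mod_lt k hmpos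
  have hdvd : (c.n + 1) ∣ (2 * c.n + 1 + 1) := ⟨2, by ring⟩
  have key2 : ∀ i : Fin (2 * c.n + 1 + 1),
      ((i + 1 : Fin (2 * c.n + 1 + 1))).val % (c.n + 1)
        = ((⟨i.val % (c.n + 1), hlt _⟩ + 1 : Fin (c.n + 1))).val := by
    intro i
    rw [Fin.val_add, Fin.val_add, Fin.val_one', Fin.val_one',
      Nat.mod_mod_of_dvd _ hdvd]
    have h1 : 1 % (2 * c.n + 1 + 1) = 1 := Nat.mod_eq_of_lt (by omega)
    rw [h1, ← Nat.add_mod]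
  refine ⟨⟨2 * c.n + 1, fun i => c.vtx ⟨i.val % (c.n + 1), hlt _⟩,
      fun i => c.sgn ⟨i.val % (c.n + 1), hlt _⟩, ?_⟩, ?_⟩
  · intro i
    have harc2 := c.arc ⟨i.val % (c.n + 1), hlt _⟩
    have heq : (⟨(i + 1 : Fin (2 * c.n + 1 + 1)).val % (c.n + 1), hlt _⟩ : Fin (c.n + 1))
        = ⟨i.val % (c.n + 1), hlt _⟩ + 1 := Fin.ext (key2 i)
    show G (c.vtx ⟨i.val % (c.n + 1), hlt _⟩)
      (c.vtx ⟨(i + 1 : Fin (2 * c.n + 1 + 1)).val % (c.n + 1), hlt _⟩)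
      (c.sgn ⟨i.val % (c.n + 1), hlt _⟩)
    rw [heq]
    exact harc2
  · show (Finset.univ.filter fun i : Fin (2 * c.n + 1 + 1) =>
      c.sgn ⟨i.val % (c.n + 1), hlt _⟩ = Sign.neg).card % 2 = 0
    set R : ℕ → ℕ := fun k => if c.sgn ⟨k % (c.n + 1), hlt k⟩ = Sign.neg then 1 else 0 with hR
    have hcard : (Finset.univ.filter fun i : Fin (2 * c.n + 1 + 1) =>
        c.sgn ⟨i.val % (c.n + 1), hlt _⟩ = Sign.neg).card
        = ∑ k ∈ Finset.range (2 * c.n + 1 + 1), R k := by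
      rw [Finset.card_filter]
      try rw [← Fin.sum_univ_eq_sum_range R (2 * c.n + 1 + 1)]
      try exact Finset.sum_congr rfl (fun i _ => by simp [hR])
    have h2 : 2 * c.n + 1 + 1 = (c.n + 1) + (c.n + 1) := by omega
    have hshift : ∀ k, R ((c.n + 1) + k) = R k := by
      intro k; simp only [hR, Nat.add_mod_left]
    rw [hcard, h2, Finset.sum_range_add]
    have : ∑ k ∈ Finset.range (c.n + 1), R ((c.n + 1) + k)
        = ∑ k ∈ Finset.range (c.n + 1), R k :=
      Finset.sum_congr rfl (fun k _ => hshift k)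
    rw [this]
    omega

private lemma no_transGen (P : Program A) (h : NoPosCycle (dg P)) :
    ∀ a, ¬ Relation.TransGen (arcRel P) a a := by
  intro a hTG
  obtain ⟨n, g, h0, hn, harc⟩ := exists_chain' hTG
  have key : ∀ i : Fin (n + 1), g ((i + 1 : Fin (n + 1)).val) = g (i.val + 1) := by
    intro i
    rcases eq_or_ne i (Fin.last n) with hi | hi
    · rw [Fin.val_add_one, if_pos hi, hi]
      simp only [Fin.val_last]
      rw [h0, hn]
    · rw [Fin.val_add_one, if_neg hi]
  have c : SCycle (dg P) :=
    { n := n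
      vtx := fun i => g i.val
      sgn := fun i => (harc i.val i.is_le).choose
      arc := fun i => by
        have hs := (harc i.val i.is_le).choose_spec
        show dg P (g i.val) (g ((i + 1 : Fin (n + 1)).val)) _
        rw [key i]
        exact hs }
  obtain ⟨c', hc'⟩ := exists_pos_cycle c
  exact h c' hc'

private lemma wf_arcRel (P : Program A) (h : NoPosCycle (dg P)) :
    WellFounded (arcRel P) := by
  have hirr : IsIrrefl A (Relation.TransGen (arcRel P)) := ⟨no_transGen P h⟩
  have hwf : WellFounded (Relation.TransGen (arcRel P)) :=
    Finite.wellFounded_of_trans_of_irrefl _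
  exact Subrelation.wf (fun hr => Relation.TransGen.single hr) hwf

private lemma rhs3_congr' {P : Program A} {I I' : A → TV3} {a : A}
    (h : ∀ u, arcRel P u a → I u = I' u) : rhs3 P I a = rhs3 P I' a := by
  unfold rhs3
  refine Finset.sup_congr rfl (fun r hr => ?_)
  by_cases hh : r.head = a
  · simp only [if_pos hh]
    unfold bodyVal3
    congr 1
    · exact Finset.inf_congr rfl fun p hp =>
        h p ⟨Sign.pos, show posArc P p a from ⟨r, hr, hh, hp⟩⟩
    · exact Finset.inf_congr rfl fun q hq => by
        rw [h q ⟨Sign.neg, show negArc P q a from ⟨r, hr, hh, hq⟩⟩]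
  · simp only [if_neg hh]

private lemma Phi_eq_rhs3 (P : Program A) (I : A → TV3) (a : A) :
    Phi P I I a = rhs3 P I a := rfl

private lemma Phi_mono' {P : Program A} {I K K' : A → TV3}
    (h : ∀ u, K u ≤ K' u) (a : A) : Phi P I K a ≤ Phi P I K' a := by
  refine Finset.sup_mono_fun (fun r hr => ?_)
  by_cases hh : r.head = a
  · simp only [if_pos hh]
    exact inf_le_inf_right _ (Finset.inf_mono_fun fun p _ => h p)
  · simp only [if_neg hh]; exact le_rfl

private lemma stable_fixed {P : Program A} {I : A → TV3}
    (hI : IsStablePartial P I) : ∀ a, rhs3 P I a = I a := by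
  have h2 : ∀ a, I a ≤ Phi P I I a :=
    hI.2 (Phi P I I) (fun a => Phi_mono' (fun u => hI.1 u) a)
  intro a
  exact le_antisymm (hI.1 a) (h2 a)

private lemma fixed_le {P : Program A} (hwf : WellFounded (arcRel P))
    {I : A → TV3} (hI : ∀ a, rhs3 P I a = I a) (K : A → TV3)
    (hK : ∀ a, Phi P I K a ≤ K a) : ∀ a, I a ≤ K a := by
  intro a
  refine hwf.induction (C := fun x => I x ≤ K x) a ?_
  intro x ih
  calc I x = Phi P I I x := (hI x).symm
    _ ≤ Phi P I K x := by
        refine Finset.sup_mono_fun (fun r hr => ?_)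
        by_cases hh : r.head = x
        · simp only [if_pos hh]
          refine inf_le_inf_right _ (Finset.inf_mono_fun ?_)
          intro p hp
          exact ih p ⟨Sign.pos, show posArc P p x from ⟨r, hr, hh, hp⟩⟩
        · simp only [if_neg hh]; exact le_rfl
    _ ≤ K x := hK x

private lemma fixed_stable {P : Program A} (hwf : WellFounded (arcRel P))
    {I : A → TV3} (hI : ∀ a, rhs3 P I a = I a) : IsStablePartial P I :=
  ⟨fun a => le_of_eq (hI a), fixed_le hwf hI⟩

private lemma fixed_unique {P : Program A} (hwf : WellFounded (arcRel P))
    {I I' : A → TV3} (h1 : ∀ a, rhs3 P I a = I a) (h2 : ∀ a, rhs3 P I' a = I' a) :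
    I = I' := by
  funext a
  refine hwf.induction (C := fun x => I x = I' x) a ?_
  intro x ih
  rw [← h1 x, ← h2 x]
  exact rhs3_congr' ih

private lemma exists_fixed {P : Program A} (hwf : WellFounded (arcRel P)) :
    ∃ I : A → TV3, ∀ a, rhs3 P I a = I a := by
  classical
  set g : ℕ → A → TV3 := fun k => (rhs3 P)^[k] (fun _ => TV3.fls) with hg
  have hiter : ∀ k, g (k + 1) = rhs3 P (g k) := fun k =>
    Function.iterate_succ_apply' (rhs3 P) k _
  have H : ∀ a, ∃ N, ∀ k, N ≤ k → g k a = g N a := by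
    intro a
    refine hwf.induction (C := fun x => ∃ N, ∀ k, N ≤ k → g k x = g N x) a ?_
    intro x ih
    set Nf : A → ℕ := fun u =>
      if h : ∃ N, ∀ k, N ≤ k → g k u = g N u then h.choose else 0 with hNfdef
    have hNf : ∀ u, arcRel P u x → ∀ k, Nf u ≤ k → g k u = g (Nf u) u := by
      intro u hu
      have h := ih u hu
      simp only [hNfdef, dif_pos h]
      exact h.choose_spec
    set N0 := Finset.univ.sup Nf with hN0
    refine ⟨N0 + 1, ?_⟩
    intro k hk
    obtain ⟨k', rfl⟩ : ∃ k', k = k' + 1 := ⟨k - 1, by omega⟩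
    have e1 : g (k' + 1) x = rhs3 P (g k') x := by rw [hiter]
    have e2 : g (N0 + 1) x = rhs3 P (g N0) x := by rw [hiter]
    rw [e1, e2]
    refine rhs3_congr' (fun u hu => ?_)
    have hu1 : Nf u ≤ N0 := Finset.le_sup (Finset.mem_univ u)
    rw [hNf u hu k' (by omega), hNf u hu N0 hu1]
  choose Nf' hNf' using H
  set M := Finset.univ.sup Nf' with hM
  refine ⟨g M, fun a => ?_⟩
  have hMa : Nf' a ≤ M := Finset.le_sup (Finset.mem_univ a)
  have e1 : rhs3 P (g M) a = g (M + 1) a := by rw [hiter]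
  rw [e1, hNf' a (M + 1) (by omega), ← hNf' a M hMa]

end
end AuxProof

/-- if the dependency graph has no positive cycle, P has exactly
one regular model. -/
theorem stmt15 {A : Type*} [Fintype A] [DecidableEq A] (P : Program A)
    (h : NoPosCycle (dg P)) :
    ∃! I : A → TV3, IsRegularModel P I := by
  have hwf := wf_arcRel P h
  obtain ⟨I, hI⟩ := exists_fixed hwf
  refine ⟨I, ⟨⟨fixed_stable hwf hI, ?_⟩, ?_⟩⟩
  · intro I' hI' _
    exact fixed_unique hwf (stable_fixed hI') hI
  · intro J hJ
    exact fixed_unique hwf (stable_fixed hJ.1) hI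
end

section
/- If the dependency graph of a finite ground normal logic program P has no positive cycle, then P has at most one stable model. -/
def agreeSign {A : Type*} (x : A → Bool) (u v : A) : Sign :=
  if x u = x v then Sign.pos else Sign.neg

theorem agreeSign_eq_of_ne {A : Type*} {x y : A → Bool} {u v : A} (hu : x u ≠ y u)
    (hv : x v ≠ y v) : agreeSign x u v = agreeSign y u v := by
  have hiff : x u = x v ↔ y u = y v := by
    revert hu hv
    cases x u <;> cases y u <;> cases x v <;> cases y v <;> decide
  simp only [agreeSign, hiff]

namespace SCycle

variable {A : Type*} {G : SGraph A}

theorem isPos_of_sgn_eq_agreeSign (c : SCycle G) (x : A → Bool)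
    (hc : ∀ i, c.sgn i = agreeSign x (c.vtx i) (c.vtx (i + 1))) : c.IsPos := by
  let w : Fin (c.n + 1) → ZMod 2 := fun i => if x (c.vtx i) then 1 else 0
  have hneg : ∀ i, (if c.sgn i = Sign.neg then (1 : ZMod 2) else 0) = w i + w (i + 1) := by
    intro i
    rw [hc i, agreeSign]
    simp only [w]
    cases x (c.vtx i) <;> cases x (c.vtx (i + 1)) <;> decide
  have hshift : ∑ i, w (i + 1) = ∑ i, w i :=
    Fintype.sum_equiv (Equiv.addRight 1) _ _ fun _ => rfl
  have hcard : ((Finset.univ.filter fun i => c.sgn i = Sign.neg).card : ZMod 2) = 0 := by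
    rw [Finset.natCast_card_filter]
    simp only [hneg, Finset.sum_add_distrib, hshift, CharTwo.add_self_eq_zero]
  exact Nat.even_iff.mp (even_iff_two_dvd.mpr ((ZMod.natCast_eq_zero_iff _ 2).mp hcard))

end SCycle

theorem Function.exists_isPeriodicPt_succ {α : Type*} [Finite α] [Nonempty α] (f : α → α) :
    ∃ y n, Function.IsPeriodicPt f (n + 1) y := by
  obtain ⟨x⟩ := ‹Nonempty α›
  obtain ⟨m, k, hmk, heq⟩ := Finite.exists_ne_map_eq_of_infinite fun n => f^[n] x
  wlog hlt : m < k generalizing m k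
  · exact this k m hmk.symm heq.symm (by omega)
  refine ⟨f^[m] x, k - m - 1, ?_⟩
  rw [Function.IsPeriodicPt, Function.IsFixedPt, ← Function.iterate_add_apply,
    show k - m - 1 + 1 + m = k by omega, heq]

theorem SGraph.exists_sCycle_of_forall_exists_pred {A : Type*} [Finite A] {G : SGraph A}
    (σ : A → A → Sign) {S : Set A} (hS : S.Nonempty)
    (hpred : ∀ a ∈ S, ∃ b ∈ S, G b a (σ b a)) :
    ∃ c : SCycle G, ∀ i, c.sgn i = σ (c.vtx i) (c.vtx (i + 1)) := by
  have : ∀ a : S, ∃ b : S, G b a (σ b a) := fun a => by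
    obtain ⟨b, hb, hba⟩ := hpred a a.2
    exact ⟨⟨b, hb⟩, hba⟩
  choose f hf using this
  have := hS.to_subtype
  obtain ⟨y, n, hy⟩ := Function.exists_isPeriodicPt_succ f
  -- the orbit of `f` runs against the arcs, hence the index `-k`
  let v : Fin (n + 1) → S := fun k => f^[(-k).val] y
  have hv : ∀ k, f (v (k + 1)) = v k := by
    intro k
    simp only [v]
    have hk : -k = -(k + 1) + 1 := by rw [neg_add, neg_add_cancel_right]
    rw [← Function.iterate_succ_apply' f, ← hy.iterate_mod_apply, hk, Fin.val_add_one (-(k + 1))]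
    split_ifs with h
    · simp [h]
    · rw [Nat.mod_eq_of_lt (Nat.succ_lt_succ (Fin.val_lt_last h))]
  exact ⟨⟨n, fun k => v k, fun k => σ (v k) (v (k + 1)), fun k => hv k ▸ hf (v (k + 1))⟩,
    fun _ => rfl⟩

namespace Finset

variable {ι : Type*} (s : Finset ι) (f : ι → Bool)

theorem sup_eq_false_iff : s.sup f = false ↔ ∀ i ∈ s, f i = false :=
  Finset.sup_eq_bot_iff f s

theorem sup_eq_true_iff : s.sup f = true ↔ ∃ i ∈ s, f i = true := by
  simp [← Bool.not_eq_false, sup_eq_false_iff]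

theorem inf_eq_true_iff : s.inf f = true ↔ ∀ i ∈ s, f i = true :=
  Finset.inf_eq_top_iff f s

end Finset

section Program

variable {A : Type*} [DecidableEq A] (P : Program A)

theorem PhiB_eq_true_iff {J K : A → Bool} {a : A} :
    PhiB P J K a = true ↔
      ∃ r ∈ P, r.head = a ∧ (∀ p ∈ r.pos, K p = true) ∧ ∀ q ∈ r.neg, J q = false := by
  simp [PhiB, Finset.sup_eq_true_iff, Finset.inf_eq_true_iff, Finset.sup_eq_false_iff]

theorem PhiB_mono {J K K' : A → Bool} (hK : K ≤ K') (a : A) : PhiB P J K a ≤ PhiB P J K' a :=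
  Finset.sup_mono_fun fun r _ => by
    split_ifs
    · exact inf_le_inf_right _ (Finset.inf_mono_fun fun p _ => hK p)
    · exact le_rfl

theorem IsStableModel.phiB_eq {J : A → Bool} (hJ : IsStableModel P J) : PhiB P J J = J :=
  funext fun a => le_antisymm (hJ.1 a) (hJ.2 _ (PhiB_mono P hJ.1) a)

theorem exists_ne_dg_of_eq_true_of_eq_false {J₁ J₂ : A → Bool} (h₁ : PhiB P J₁ J₁ = J₁)
    (h₂ : PhiB P J₂ J₂ = J₂) {a : A} (ha₁ : J₁ a = true) (ha₂ : J₂ a = false) :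
    ∃ b, J₁ b ≠ J₂ b ∧ dg P b a (agreeSign J₁ b a) := by
  obtain ⟨r, hr, rfl, hpos, hneg⟩ := (PhiB_eq_true_iff P).mp (h₁ ▸ ha₁)
  have hbody₂ : ¬ ((∀ p ∈ r.pos, J₂ p = true) ∧ ∀ q ∈ r.neg, J₂ q = false) := fun hbody => by
    simpa [h₂, ha₂] using (PhiB_eq_true_iff P).mpr ⟨r, hr, rfl, hbody⟩
  simp only [not_and_or, not_forall, exists_prop] at hbody₂
  rcases hbody₂ with ⟨p, hp, hp₂⟩ | ⟨q, hq, hq₂⟩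
  · refine ⟨p, by simp_all, ?_⟩
    rw [agreeSign, if_pos (by rw [hpos p hp, ha₁])]
    exact ⟨r, hr, rfl, hp⟩
  · refine ⟨q, by simp_all, ?_⟩
    rw [agreeSign, if_neg (by rw [hneg q hq, ha₁]; decide)]
    exact ⟨r, hr, rfl, hq⟩

theorem exists_ne_dg_of_ne {J₁ J₂ : A → Bool} (h₁ : PhiB P J₁ J₁ = J₁)
    (h₂ : PhiB P J₂ J₂ = J₂) {a : A} (ha : J₁ a ≠ J₂ a) :
    ∃ b, J₁ b ≠ J₂ b ∧ dg P b a (agreeSign J₁ b a) := by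
  cases ha₁ : J₁ a
  · obtain ⟨b, hb, hba⟩ := exists_ne_dg_of_eq_true_of_eq_false P h₂ h₁ (by simp_all) ha₁
    exact ⟨b, hb.symm, agreeSign_eq_of_ne hb.symm ha ▸ hba⟩
  · exact exists_ne_dg_of_eq_true_of_eq_false P h₁ h₂ ha₁ (by simp_all)

end Program

/-- if the dependency graph has no positive cycle, P has at most
one stable model. -/
theorem stmt16 {A : Type*} [Fintype A] [DecidableEq A] (P : Program A)
    (h : NoPosCycle (dg P)) :
    ∀ J₁ J₂ : A → Bool, IsStableModel P J₁ → IsStableModel P J₂ → J₁ = J₂ := by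
  intro J₁ J₂ h₁ h₂
  by_contra hne
  obtain ⟨a, ha⟩ := Function.ne_iff.mp hne
  obtain ⟨c, hc⟩ := SGraph.exists_sCycle_of_forall_exists_pred (agreeSign J₁)
    (S := {a | J₁ a ≠ J₂ a}) ⟨a, ha⟩ fun _ hb => exists_ne_dg_of_ne P h₁.phiB_eq h₂.phiB_eq hb
  exact h c (c.isPos_of_sgn_eq_agreeSign J₁ hc)
end

section
/- Let P be a finite ground normal logic program and U⁺ a positive feedback vertex set of its dependency graph. Then the number of regular models of P is at most 3^{|U⁺|}. -/
section AuxStmt17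

variable {A : Type*} [Fintype A] [DecidableEq A]

instance : Fintype TV3 := ⟨{.fls, .unk, .tru}, by intro x; cases x <;> decide⟩

lemma TV3.neg_anti {x y : TV3} (h : x ≤ y) : TV3.neg y ≤ TV3.neg x := by
  cases x <;> cases y <;> first | rfl | exact absurd h (by decide) | decide

lemma rhs3_anti (P : Program A) (a b : A) (hb : ¬ posArc P b a) (J : A → TV3)
    {x y : TV3} (hxy : x ≤ y) :
    rhs3 P (Function.update J b y) a ≤ rhs3 P (Function.update J b x) a := by
  unfold rhs3
  apply Finset.sup_mono_fun
  intro r hr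
  by_cases hh : r.head = a
  · simp only [hh, if_true]
    unfold bodyVal3
    apply inf_le_inf
    · apply Finset.inf_mono_fun
      intro p hp
      rcases eq_or_ne p b with rfl | hpb
      · exact absurd ⟨r, hr, hh, hp⟩ hb
      · rw [Function.update_of_ne hpb, Function.update_of_ne hpb]
    · apply Finset.inf_mono_fun
      intro q hq
      rcases eq_or_ne q b with rfl | hqb
      · simp only [Function.update_self]; exact TV3.neg_anti hxy
      · rw [Function.update_of_ne hqb, Function.update_of_ne hqb]
  · simp [hh]

lemma rhs3_mono (P : Program A) (a b : A) (hb : ¬ negArc P b a) (J : A → TV3)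
    {x y : TV3} (hxy : x ≤ y) :
    rhs3 P (Function.update J b x) a ≤ rhs3 P (Function.update J b y) a := by
  unfold rhs3
  apply Finset.sup_mono_fun
  intro r hr
  by_cases hh : r.head = a
  · simp only [hh, if_true]
    unfold bodyVal3
    apply inf_le_inf
    · apply Finset.inf_mono_fun
      intro p hp
      rcases eq_or_ne p b with rfl | hpb
      · simp only [Function.update_self]; exact hxy
      · rw [Function.update_of_ne hpb, Function.update_of_ne hpb]
    · apply Finset.inf_mono_fun
      intro q hq
      rcases eq_or_ne q b with rfl | hqb
      · exact absurd ⟨r, hr, hh, hq⟩ hb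
      · rw [Function.update_of_ne hqb, Function.update_of_ne hqb]
  · simp [hh]

lemma rhs3_lt_exists (P : Program A) :
    ∀ (n : ℕ) (J₁ J₂ : A → TV3) (a : A),
      (Finset.univ.filter fun b => J₁ b ≠ J₂ b).card ≤ n →
      rhs3 P J₁ a < rhs3 P J₂ a →
      ∃ b, (posArc P b a ∧ J₁ b < J₂ b) ∨ (negArc P b a ∧ J₂ b < J₁ b) := by
  intro n
  induction n with
  | zero =>
    intro J₁ J₂ a hc hlt
    have heq : J₁ = J₂ := by
      funext b
      by_contra hb
      have hmem : b ∈ Finset.univ.filter fun b => J₁ b ≠ J₂ b := by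
        simp [hb]
      have := Finset.card_pos.mpr ⟨b, hmem⟩
      omega
    rw [heq] at hlt
    exact absurd hlt (lt_irrefl _)
  | succ n ih =>
    intro J₁ J₂ a hc hlt
    by_cases hne : ∃ b, J₁ b ≠ J₂ b
    · obtain ⟨b, hb⟩ := hne
      set J₁' := Function.update J₁ b (J₂ b) with hJ'
      rcases lt_or_ge (rhs3 P J₁ a) (rhs3 P J₁' a) with hstep | hle
      · rcases lt_or_gt_of_ne hb with hlt' | hgt'
        · refine ⟨b, Or.inl ⟨?_, hlt'⟩⟩
          by_contra hpos
          have h2 := rhs3_anti P a b hpos J₁ (le_of_lt hlt')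
          rw [Function.update_eq_self] at h2
          exact absurd hstep (not_lt.mpr h2)
        · refine ⟨b, Or.inr ⟨?_, hgt'⟩⟩
          by_contra hneg
          have h2 := rhs3_mono P a b hneg J₁ (le_of_lt hgt')
          rw [Function.update_eq_self] at h2
          exact absurd hstep (not_lt.mpr h2)
      · have hlt2 : rhs3 P J₁' a < rhs3 P J₂ a := lt_of_le_of_lt hle hlt
        have hbmem : b ∈ Finset.univ.filter fun c => J₁ c ≠ J₂ c := by simp [hb]
        have hsub : (Finset.univ.filter fun c => J₁' c ≠ J₂ c) ⊆
            (Finset.univ.filter fun c => J₁ c ≠ J₂ c) \ {b} := by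
          intro c hcmem
          simp only [Finset.mem_filter, Finset.mem_univ, true_and] at hcmem
          have hcb : c ≠ b := by
            rintro rfl
            exact hcmem (by simp [hJ'])
          simp only [Finset.mem_sdiff, Finset.mem_filter, Finset.mem_univ, true_and,
            Finset.mem_singleton]
          refine ⟨?_, hcb⟩
          rwa [hJ', Function.update_of_ne hcb] at hcmem
        have hcard : (Finset.univ.filter fun c => J₁' c ≠ J₂ c).card ≤ n := by
          have h1 := Finset.card_le_card hsub
          have h2 : ((Finset.univ.filter fun c => J₁ c ≠ J₂ c) \ {b}).card =
              (Finset.univ.filter fun c => J₁ c ≠ J₂ c).card - 1 := by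
            rw [Finset.card_sdiff_of_subset (by simpa using hbmem)]
            simp
          have h3 := Finset.card_pos.mpr ⟨b, hbmem⟩
          omega
        obtain ⟨b', hb'⟩ := ih J₁' J₂ a hcard hlt2
        have hbb : b' ≠ b := by
          rintro rfl
          rcases hb' with ⟨_, hlt3⟩ | ⟨_, hlt3⟩ <;>
            simp [hJ', Function.update_self] at hlt3
        rw [hJ', Function.update_of_ne hbb] at hb'
        exact ⟨b', hb'⟩
    · push_neg at hne
      rw [funext hne] at hlt
      exact absurd hlt (lt_irrefl _)

lemma phi_mono (P : Program A) (I K K' : A → TV3) (h : ∀ a, K a ≤ K' a) (a : A) :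
    Phi P I K a ≤ Phi P I K' a := by
  unfold Phi
  apply Finset.sup_mono_fun
  intro r hr
  by_cases hh : r.head = a
  · simp only [hh, if_true]
    exact inf_le_inf (Finset.inf_mono_fun fun p _ => h p) le_rfl
  · simp [hh]

lemma stable_fix (P : Program A) (I : A → TV3) (hI : IsStablePartial P I) (a : A) :
    I a = rhs3 P I a := by
  have h1 := hI.1
  have hPhi : ∀ a, Phi P I I a = rhs3 P I a := by
    intro a; rfl
  have h2 : ∀ a, I a ≤ Phi P I I a := by
    apply hI.2
    intro a
    exact le_trans (phi_mono P I _ _ h1 a) (le_refl _)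
  rw [← hPhi a]
  exact le_antisymm (h2 a) (h1 a)

lemma fix_agree (P : Program A) (U : Finset A) (h : IsPFVS (dg P) U)
    (I₁ I₂ : A → TV3) (h₁ : ∀ a, I₁ a = rhs3 P I₁ a) (h₂ : ∀ a, I₂ a = rhs3 P I₂ a)
    (hU : ∀ a ∈ U, I₁ a = I₂ a) : I₁ = I₂ := by
  classical
  by_contra hne
  have hD : ∃ a, I₁ a ≠ I₂ a := by
    by_contra hc
    push_neg at hc
    exact hne (funext hc)
  set δ : A → Bool := fun a => decide (I₁ a < I₂ a) with hδdef
  -- predecessor property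
  have hpred : ∀ a, I₁ a ≠ I₂ a → ∃ b, I₁ b ≠ I₂ b ∧
      ((posArc P b a ∧ δ b = δ a) ∨ (negArc P b a ∧ δ b ≠ δ a)) := by
    intro a ha
    have hcard : ∀ J₁ J₂ : A → TV3,
        (Finset.univ.filter fun b => J₁ b ≠ J₂ b).card ≤ Fintype.card A :=
      fun J₁ J₂ => le_trans (Finset.card_filter_le _ _) (le_of_eq Finset.card_univ)
    rcases lt_or_gt_of_ne ha with hlt | hgt
    · have hlt' : rhs3 P I₁ a < rhs3 P I₂ a := by rw [← h₁ a, ← h₂ a]; exact hlt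
      obtain ⟨b, hb⟩ := rhs3_lt_exists P (Fintype.card A) I₁ I₂ a (hcard _ _) hlt'
      rcases hb with ⟨hp, hl⟩ | ⟨hn, hl⟩
      · refine ⟨b, ne_of_lt hl, Or.inl ⟨hp, ?_⟩⟩
        simp only [hδdef]
        exact decide_eq_decide.mpr (iff_of_true hl hlt)
      · refine ⟨b, ne_of_gt hl, Or.inr ⟨hn, ?_⟩⟩
        simp only [hδdef]
        intro hcon
        rw [decide_eq_decide] at hcon
        exact absurd (hcon.mpr hlt) (not_lt.mpr (le_of_lt hl))
    · have hlt' : rhs3 P I₂ a < rhs3 P I₁ a := by rw [← h₁ a, ← h₂ a]; exact hgt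
      obtain ⟨b, hb⟩ := rhs3_lt_exists P (Fintype.card A) I₂ I₁ a (hcard _ _) hlt'
      rcases hb with ⟨hp, hl⟩ | ⟨hn, hl⟩
      · refine ⟨b, ne_of_gt hl, Or.inl ⟨hp, ?_⟩⟩
        simp only [hδdef]
        exact decide_eq_decide.mpr
          (iff_of_false (not_lt.mpr (le_of_lt hl)) (not_lt.mpr (le_of_lt hgt)))
      · refine ⟨b, ne_of_lt hl, Or.inr ⟨hn, ?_⟩⟩
        simp only [hδdef]
        intro hcon
        rw [decide_eq_decide] at hcon
        exact absurd (hcon.mp hl) (not_lt.mpr (le_of_lt hgt))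
  have hpred' : ∀ a, ∃ b, I₁ a ≠ I₂ a → I₁ b ≠ I₂ b ∧
      ((posArc P b a ∧ δ b = δ a) ∨ (negArc P b a ∧ δ b ≠ δ a)) := by
    intro a
    by_cases ha : I₁ a ≠ I₂ a
    · obtain ⟨b, hb⟩ := hpred a ha
      exact ⟨b, fun _ => hb⟩
    · exact ⟨a, fun hcon => absurd hcon ha⟩
  choose f hf using hpred'
  obtain ⟨a₀, ha₀⟩ := hD
  set x : ℕ → A := fun n => f^[n] a₀ with hxdef
  have hxsucc : ∀ m, x (m + 1) = f (x m) := fun m => Function.iterate_succ_apply' f m a₀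
  have hxD : ∀ m, I₁ (x m) ≠ I₂ (x m) := by
    intro m
    induction m with
    | zero => exact ha₀
    | succ m ih => rw [hxsucc m]; exact (hf (x m) ih).1
  -- pigeonhole
  obtain ⟨i, j, hij_ne, hij_eq⟩ := Finite.exists_ne_map_eq_of_infinite x
  wlog hij : i < j generalizing i j
  · exact this j i hij_ne.symm hij_eq.symm (by omega)
  set n : ℕ := j - i - 1 with hn
  have hjn : j = i + n + 1 := by omega
  set vtx : Fin (n + 1) → A := fun k => x (j - 1 - (k : ℕ)) with hvtx
  have hvD : ∀ k, I₁ (vtx k) ≠ I₂ (vtx k) := fun k => hxD _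
  have hstep : ∀ k : Fin (n + 1), vtx k = f (vtx (k + 1)) := by
    intro k
    have hklt : (k : ℕ) < n + 1 := k.isLt
    by_cases hkn : (k : ℕ) = n
    · have hlast : k = Fin.last n := Fin.ext hkn
      have hzero : ((k + 1 : Fin (n + 1)) : ℕ) = 0 := by
        rw [hlast]; simp
      have h1 : vtx k = x i := by
        simp only [hvtx, hkn]
        congr 1
        omega
      have h2 : vtx (k + 1) = x (j - 1) := by
        simp only [hvtx, hzero]
        norm_num
      rw [h1, h2, hij_eq]
      conv_lhs => rw [show j = (j - 1) + 1 by omega]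
      rw [hxsucc]
    · have hklt' : (k : ℕ) < n := by omega
      have hsuc : ((k + 1 : Fin (n + 1)) : ℕ) = (k : ℕ) + 1 := by
        have := Fin.val_add_one k
        rw [if_neg (fun hcon => hkn (by rw [hcon]; simp))] at this
        exact this
      simp only [hvtx, hsuc]
      have harith : j - 1 - (k : ℕ) = (j - 1 - ((k : ℕ) + 1)) + 1 := by omega
      rw [harith, hxsucc]
  set sgn : Fin (n + 1) → Sign :=
    fun k => if δ (vtx k) = δ (vtx (k + 1)) then Sign.pos else Sign.neg with hsgn
  have harc : ∀ k, dg P (vtx k) (vtx (k + 1)) (sgn k) := by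
    intro k
    have hb := (hf (vtx (k + 1)) (hvD (k + 1))).2
    rw [← hstep k] at hb
    rcases hb with ⟨hp, he⟩ | ⟨hn', he⟩
    · have hs : sgn k = Sign.pos := if_pos he
      rw [hs]; exact hp
    · have hs : sgn k = Sign.neg := if_neg he
      rw [hs]; exact hn'
  set c : SCycle (dg P) := ⟨n, vtx, sgn, harc⟩ with hc
  have hpos : c.IsPos := by
    show (Finset.univ.filter fun i => sgn i = Sign.neg).card % 2 = 0
    have hterm : ∀ k : Fin (n + 1),
        ((if sgn k = Sign.neg then 1 else 0 : ℕ) : ZMod 2)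
          = (if δ (vtx k) then 1 else 0) + (if δ (vtx (k + 1)) then 1 else 0) := by
      intro k
      by_cases hδ : δ (vtx k) = δ (vtx (k + 1))
      · rw [show sgn k = Sign.pos from if_pos hδ, ← hδ]
        rcases Bool.eq_false_or_eq_true (δ (vtx k)) with hb1 | hb1 <;>
          rw [hb1] <;> decide
      · rw [show sgn k = Sign.neg from if_neg hδ]
        rcases Bool.eq_false_or_eq_true (δ (vtx k)) with hb1 | hb1 <;>
          rcases Bool.eq_false_or_eq_true (δ (vtx (k + 1))) with hb2 | hb2 <;>
          first
            | exact absurd (hb1.trans hb2.symm) hδ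
            | (rw [hb1, hb2]; decide)
    have hcast : (((Finset.univ.filter fun i => sgn i = Sign.neg).card : ℕ) : ZMod 2) = 0 := by
      rw [Finset.card_filter, Nat.cast_sum]
      rw [Finset.sum_congr rfl (fun k _ => hterm k)]
      rw [Finset.sum_add_distrib]
      have hshift : (∑ k : Fin (n + 1), (if δ (vtx (k + 1)) then (1 : ZMod 2) else 0))
          = ∑ k : Fin (n + 1), (if δ (vtx k) then (1 : ZMod 2) else 0) :=
        Fintype.sum_equiv (Equiv.addRight 1)
          (fun k => if δ (vtx (k + 1)) then (1 : ZMod 2) else 0)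
          (fun k => if δ (vtx k) then (1 : ZMod 2) else 0)
          (fun k => rfl)
      rw [hshift, ← two_mul]
      have h2 : (2 : ZMod 2) = 0 := by decide
      rw [h2, zero_mul]
    have hdvd : 2 ∣ (Finset.univ.filter fun i => sgn i = Sign.neg).card :=
      (ZMod.natCast_eq_zero_iff _ 2).mp hcast
    omega
  obtain ⟨k, hk⟩ := h c hpos
  exact hvD k (hU (vtx k) hk)

end AuxStmt17

/-- if U⁺ is a positive feedback vertex set of the dependency
graph, P has at most 3^|U⁺| regular models. -/
theorem stmt17 {A : Type*} [Fintype A] [DecidableEq A] (P : Program A)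
    (U : Finset A) (h : IsPFVS (dg P) U) :
    {I : A → TV3 | IsRegularModel P I}.ncard ≤ 3 ^ U.card := by
  classical
  have hinj : Set.InjOn (fun I : A → TV3 => fun u : U => I u)
      {I : A → TV3 | IsRegularModel P I} := by
    intro I₁ hI₁ I₂ hI₂ hEq
    apply fix_agree P U h I₁ I₂ (stable_fix P I₁ hI₁.1) (stable_fix P I₂ hI₂.1)
    intro a ha
    exact congrFun hEq ⟨a, ha⟩
  calc {I : A → TV3 | IsRegularModel P I}.ncard
      ≤ (Set.univ : Set (U → TV3)).ncard :=
        Set.ncard_le_ncard_of_injOn _ (fun a _ => trivial) hinj Set.finite_univ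
    _ = 3 ^ U.card := by
        rw [Set.ncard_univ, Nat.card_eq_fintype_card, Fintype.card_fun,
          Fintype.card_coe, show Fintype.card TV3 = 3 from rfl]
end
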